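/- Let σ be a well-balanced nontrivial automorphism of a finite hypergraph with p orbits of cardinality q each. Define a quotient hypergraph whose nodes are Fin q, obtained by grouping into a single node all nodes whose orbit-index decomposition has the same second coordinate, and whose edges are the edges of H connecting nodes in at least two distinct groups, with each quotient edge connecting the groups its original nodes lie in. Then the shift map j ↦ j+1 mod q on Fin q extends to an automorphism of the quotient hypergraph with a single orbit. -/

import Mathlib

structure HypergraphStmt (N X : Type*) [Fintype N] [Fintype X] where
  t : X → Set N

def orbitOf {N : Type*} (σ : Equiv.Perm N) (n : N) : Set N :=
  {m | ∃ j : ℕ, (σ ^ j) n = m}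

/-!
The node automorphism covers the shift `j ↦ j + 1` on groups, which is injective, so an edge
crosses two groups iff its image under `σX` does; hence `σX` restricts to the quotient edges and
acts on their group sets by the shift. The shift reaches `k` from `j` in `k - j` steps.
-/

open Function Set

theorem exists_mem_image_ne_iff_of_semiconj {N G : Type*} {π : N → G} {f : N → N} {s : G → G}
    (hs : Injective s) (hπ : Semiconj π f s) (S : Set N) :
    (∃ n ∈ f '' S, ∃ m ∈ f '' S, π n ≠ π m) ↔ ∃ n ∈ S, ∃ m ∈ S, π n ≠ π m := by
  simp only [exists_mem_image, hπ.eq, hs.ne_iff]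

theorem exists_perm_crossing_edges_of_semiconj {N G X : Type*} (t : X → Set N) (π : N → G)
    {f : N → N} {s : G → G} (hs : Injective s) (hπ : Semiconj π f s) (σX : Equiv.Perm X)
    (hσX : ∀ x, t (σX x) = f '' t x) :
    ∃ ρX : Equiv.Perm {x : X // ∃ n ∈ t x, ∃ m ∈ t x, π n ≠ π m},
      ∀ x, π '' t (ρX x).val = s '' (π '' t x.val) := by
  refine ⟨σX.subtypePerm fun x ↦ ?_, fun x ↦ ?_⟩
  · rw [hσX]
    exact exists_mem_image_ne_iff_of_semiconj hs hπ (t x)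
  · exact (congrArg (π '' ·) (hσX x)).trans (hπ.set_image (t x))

open Fin.CommRing in
theorem orbitOf_addRight_one {q : ℕ} [NeZero q] (j : Fin q) :
    orbitOf (Equiv.addRight (1 : Fin q)) j = univ :=
  eq_univ_of_forall fun k ↦ ⟨(k - j).val, by simp⟩

theorem quotient_has_one_orbit_automorphism_general
    (p q : ℕ) [NeZero q] (X : Type*) [Fintype X]
    (H : HypergraphStmt (Fin p × Fin q) X) (σX : Equiv.Perm X)
    (hAut : ∀ x : X,
      H.t (σX x) = (fun n : Fin p × Fin q => (n.1, n.2 + 1)) '' H.t x) :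
    ∃ ρX : Equiv.Perm {x : X // ∃ n ∈ H.t x, ∃ m ∈ H.t x, n.2 ≠ m.2},
      (∀ x : {x : X // ∃ n ∈ H.t x, ∃ m ∈ H.t x, n.2 ≠ m.2},
        Prod.snd '' H.t (ρX x).val =
          (fun j : Fin q => j + 1) '' (Prod.snd '' H.t x.val)) ∧
      (∀ j : Fin q, orbitOf (Equiv.addRight (1 : Fin q)) j = Set.univ) := by
  obtain ⟨ρX, hρX⟩ := exists_perm_crossing_edges_of_semiconj H.t Prod.snd
    (s := fun j : Fin q ↦ j + 1) (add_left_injective 1) (fun _ ↦ rfl) σX hAut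
  exact ⟨ρX, hρX, orbitOf_addRight_one⟩

/-- Quotienting a hypergraph by a well-balanced nontrivial automorphism:
nodes are identified with `Fin p × Fin q` so that the automorphism acts as
`(i, j) ↦ (i, j+1 mod q)`.  The quotient hypergraph has nodes `Fin q`
(grouping together nodes with the same second coordinate), and as edges
those edges of `H` connecting nodes in at least two distinct groups, each
such edge connecting the groups its original nodes lie in.  Then the shift
map `j ↦ j+1 mod q` extends to an automorphism of the quotient hypergraph
having a single orbit. -/
theorem quotient_has_one_orbit_automorphism
    (p q : ℕ) [NeZero q] (hq : 1 < q) (X : Type*) [Fintype X]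
    (H : HypergraphStmt (Fin p × Fin q) X) (σX : Equiv.Perm X)
    (hAut : ∀ x : X,
      H.t (σX x) = (fun n : Fin p × Fin q => (n.1, n.2 + 1)) '' H.t x) :
    ∃ ρX : Equiv.Perm {x : X // ∃ n ∈ H.t x, ∃ m ∈ H.t x, n.2 ≠ m.2},
      (∀ x : {x : X // ∃ n ∈ H.t x, ∃ m ∈ H.t x, n.2 ≠ m.2},
        Prod.snd '' H.t (ρX x).val =
          (fun j : Fin q => j + 1) '' (Prod.snd '' H.t x.val)) ∧
      (∀ j : Fin q, orbitOf (Equiv.addRight (1 : Fin q)) j = Set.univ) :=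
  quotient_has_one_orbit_automorphism_general p q X H σX hAut
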